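/- arXiv:1302.3498 — 3 statements merged into one kernel-verified Lean document; each statement's English description precedes it below -/
import Mathlib

section
/- A circulant graph G = C_n(D) is a CIS graph if and only if the following three conditions hold: every maximal stable set of G has size α(G), every maximal clique of G has size ω(G), and α(G)·ω(G) = n. -/
open SimpleGraph Finset

/-- The circulant graph `C_n(D)` on vertex set `ZMod n` with distance set
`D ⊆ {1, …, n-1}`: distinct vertices `i, j` are adjacent iff `(i - j) mod n ∈ D`. -/
def circulant (n : ℕ) (D : Finset ℕ) : SimpleGraph (ZMod n) :=
  SimpleGraph.fromRel (fun i j => (i - j).val ∈ D)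

/-- A graph is a CIS graph if every maximal clique and every maximal stable set
(equivalently, every maximal clique of the complement) intersect. -/
def SimpleGraph.IsCIS {V : Type*} (G : SimpleGraph V) : Prop :=
  ∀ C S : Set V, Maximal G.IsClique C → Maximal Gᶜ.IsClique S → (C ∩ S).Nonempty

/-- The distance set `{d ∈ {1,…,n-1} : a ∣ d ∧ a*b ∤ d}` of a pair `(a, b)`. -/
def pairedD (n a b : ℕ) : Finset ℕ :=
  (Finset.Icc 1 (n - 1)).filter (fun d => a ∣ d ∧ ¬ (a * b) ∣ d)

/-- The `k`-paired circulant `C(n; a_1,b_1; …; a_k,b_k)` (index type `ι`). -/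
def pairedCirculant (n : ℕ) {ι : Type*} [Fintype ι] (a b : ι → ℕ) : SimpleGraph (ZMod n) :=
  circulant n (Finset.univ.biUnion (fun i => pairedD n (a i) (b i)))

/-- The lexicographic product of two simple graphs. -/
def lexProd {α β : Type*} (G : SimpleGraph α) (H : SimpleGraph β) : SimpleGraph (α × β) where
  Adj p q := G.Adj p.1 q.1 ∨ (p.1 = q.1 ∧ H.Adj p.2 q.2)
  symm := by
    constructor
    intro p q h
    rcases h with h | ⟨h1, h2⟩
    · exact Or.inl h.symm
    · exact Or.inr ⟨h1.symm, h2.symm⟩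
  loopless := by
    constructor
    intro p h
    rcases h with h | ⟨_, h⟩
    · exact G.loopless.irrefl _ h
    · exact H.loopless.irrefl _ h

/-!
A clique and a stable set share at most one vertex. Translations of `ZMod n` are automorphisms of
a circulant, so they permute its maximal cliques, and summing over the `n` translates `t + C` of a
clique `C` counts each point of `C × S` once: `∑ₜ |(t + C) ∩ S| = |C| |S|`. Hence every translate
of a maximal clique `C` meets a maximal stable set `S` iff `|C| |S| = n`, so a circulant is CIS iff
`|C| |S| = n` for all such pairs; comparing with a maximum clique and a maximum stable set turns
this into the three conditions.
-/

open scoped Pointwise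

section Translates

variable {α β : Type*} [AddGroup α]

theorem maximal_vadd_set [AddAction α β] {P : Set β → Prop}
    (hP : ∀ (t : α) (s : Set β), P (t +ᵥ s) ↔ P s) {s : Set β} (hs : Maximal P s) (t : α) :
    Maximal P (t +ᵥ s) := by
  refine ⟨(hP t s).2 hs.1, fun u hu hsu => ?_⟩
  rw [Set.vadd_set_subset_iff_subset_neg_vadd_set] at hsu
  rw [Set.subset_vadd_set_iff]
  exact hs.2 ((hP (-t) u).2 hu) hsu

variable [Fintype α] [DecidableEq α]

theorem sum_card_vadd_finset_inter (C S : Finset α) :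
    ∑ t : α, #((t +ᵥ C) ∩ S) = #C * #S := by
  have hfiber : ∀ s : α, #{t | s ∈ t +ᵥ C} = #C := fun s =>
    Finset.card_nbij' (fun t => -t + s) (fun c => s + -c)
      (by intro t; simp [← Finset.neg_vadd_mem_iff])
      (by intro c; simp [← Finset.neg_vadd_mem_iff, add_assoc])
      (by intro t _; simp)
      (by intro c _; simp)
  calc ∑ t : α, #((t +ᵥ C) ∩ S)
      = ∑ t : α, #(S.bipartiteAbove (fun t s => s ∈ t +ᵥ C) t) := by
        simp only [Finset.bipartiteAbove, Finset.filter_mem_eq_inter, Finset.inter_comm]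
    _ = ∑ s ∈ S, #{t | s ∈ t +ᵥ C} :=
        Finset.sum_card_bipartiteAbove_eq_sum_card_bipartiteBelow _
    _ = #C * #S := by simp [hfiber, mul_comm]

theorem forall_vadd_finset_inter_nonempty_iff {C S : Finset α}
    (hle : ∀ t : α, #((t +ᵥ C) ∩ S) ≤ 1) :
    (∀ t : α, ((t +ᵥ C) ∩ S).Nonempty) ↔ #C * #S = Fintype.card α := by
  rw [← sum_card_vadd_finset_inter, Fintype.card, Finset.card_eq_sum_ones,
    Finset.sum_eq_sum_iff_of_le fun t _ => hle t]
  simp only [Finset.mem_univ, true_implies, ← Finset.card_pos]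
  exact forall_congr' fun t => by have := hle t; omega

end Translates

theorem SimpleGraph.IsClique.subsingleton_inter_of_isClique_compl {V : Type*}
    {G : SimpleGraph V} {C S : Set V} (hC : G.IsClique C) (hS : Gᶜ.IsClique S) :
    (C ∩ S).Subsingleton := fun a ha b hb => by
  by_contra hab
  exact (hS ha.2 hb.2 hab).2 (hC ha.1 hb.1 hab)

section TranslationInvariant

variable {α : Type*} [AddGroup α]

def SimpleGraph.IsTranslationInvariant (G : SimpleGraph α) : Prop :=
  ∀ t a b : α, G.Adj (t + a) (t + b) ↔ G.Adj a b

namespace SimpleGraph.IsTranslationInvariant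

variable {G : SimpleGraph α}

theorem isClique_vadd_set_iff (hG : G.IsTranslationInvariant) (t : α) (s : Set α) :
    G.IsClique (t +ᵥ s) ↔ G.IsClique s := by
  simp [SimpleGraph.IsClique, Set.Pairwise, Set.mem_vadd_set, hG t]

theorem maximal_isClique_vadd_set (hG : G.IsTranslationInvariant) {C : Set α}
    (hC : Maximal G.IsClique C) (t : α) : Maximal G.IsClique (t +ᵥ C) :=
  maximal_vadd_set hG.isClique_vadd_set_iff hC t

theorem forall_vadd_set_inter_nonempty_iff [Finite α] (hG : G.IsTranslationInvariant)
    {C S : Set α} (hC : G.IsClique C) (hS : Gᶜ.IsClique S) :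
    (∀ t : α, ((t +ᵥ C) ∩ S).Nonempty) ↔ C.ncard * S.ncard = Nat.card α := by
  classical
  have := Fintype.ofFinite α
  lift C to Finset α using C.toFinite
  lift S to Finset α using S.toFinite
  simp only [← Finset.coe_vadd_finset, ← Finset.coe_inter, Finset.coe_nonempty,
    Set.ncard_coe_finset, Nat.card_eq_fintype_card]
  refine forall_vadd_finset_inter_nonempty_iff fun t => Finset.card_le_one.2 ?_
  have := ((hG.isClique_vadd_set_iff t _).2 hC).subsingleton_inter_of_isClique_compl hS
  rwa [← Finset.coe_vadd_finset, ← Finset.coe_inter] at this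

theorem isCIS_iff [Finite α] (hG : G.IsTranslationInvariant) :
    G.IsCIS ↔ ∀ C S : Set α, Maximal G.IsClique C → Maximal Gᶜ.IsClique S →
      C.ncard * S.ncard = Nat.card α := by
  refine ⟨fun hCIS C S hC hS => ?_, fun h C S hC hS => ?_⟩
  · exact (hG.forall_vadd_set_inter_nonempty_iff hC.1 hS.1).1
      fun t => hCIS _ S (hG.maximal_isClique_vadd_set hC t) hS
  · simpa using (hG.forall_vadd_set_inter_nonempty_iff hC.1 hS.1).2 (h C S hC hS) 0

end SimpleGraph.IsTranslationInvariant

end TranslationInvariant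

namespace SimpleGraph

variable {V : Type*} {G : SimpleGraph V}

theorem exists_maximal_isClique_ncard_eq_cliqueNum [Finite V] :
    ∃ C : Set V, Maximal G.IsClique C ∧ C.ncard = G.cliqueNum := by
  obtain ⟨C, hC⟩ := G.maximumClique_exists
  exact ⟨C, hC.isMaximalClique, by rw [Set.ncard_coe_finset, maximumClique_card_eq_cliqueNum C hC]⟩

theorem ncard_pos_of_maximal_isClique [Finite V] [Nonempty V] {C : Set V}
    (hC : Maximal G.IsClique C) : 0 < C.ncard := by
  rw [Set.ncard_pos, Set.nonempty_iff_ne_empty]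
  rintro rfl
  obtain ⟨v⟩ := ‹Nonempty V›
  exact Set.singleton_ne_empty v
    (Set.subset_empty_iff.1 (hC.2 (G.isClique_singleton v) (Set.empty_subset _)))

theorem forall_maximal_ncard_mul_ncard_eq_iff [Finite V] [Nonempty V] (N : ℕ) :
    (∀ C S : Set V, Maximal G.IsClique C → Maximal Gᶜ.IsClique S → C.ncard * S.ncard = N) ↔
      ((∀ S : Set V, Maximal Gᶜ.IsClique S → S.ncard = Gᶜ.cliqueNum) ∧
        (∀ C : Set V, Maximal G.IsClique C → C.ncard = G.cliqueNum) ∧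
        Gᶜ.cliqueNum * G.cliqueNum = N) := by
  obtain ⟨C₀, hC₀, hC₀card⟩ := G.exists_maximal_isClique_ncard_eq_cliqueNum
  obtain ⟨S₀, hS₀, hS₀card⟩ := Gᶜ.exists_maximal_isClique_ncard_eq_cliqueNum
  constructor
  · intro h
    refine ⟨fun S hS => ?_, fun C hC => ?_, ?_⟩
    · rw [← hS₀card]
      exact Nat.eq_of_mul_eq_mul_left (ncard_pos_of_maximal_isClique hC₀)
        ((h C₀ S hC₀ hS).trans (h C₀ S₀ hC₀ hS₀).symm)
    · rw [← hC₀card]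
      exact Nat.eq_of_mul_eq_mul_right (ncard_pos_of_maximal_isClique hS₀)
        ((h C S₀ hC hS₀).trans (h C₀ S₀ hC₀ hS₀).symm)
    · rw [← hC₀card, ← hS₀card, mul_comm, h C₀ S₀ hC₀ hS₀]
  · rintro ⟨hS, hC, hN⟩ C S hCmax hSmax
    rw [hC C hCmax, hS S hSmax, mul_comm, hN]

end SimpleGraph

theorem circulant_isTranslationInvariant (n : ℕ) (D : Finset ℕ) :
    (circulant n D).IsTranslationInvariant := fun _ _ _ => by
  simp [circulant]

theorem stmt_0_general (n : ℕ) (hn : 0 < n) (D : Finset ℕ) :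
    (circulant n D).IsCIS ↔
      ((∀ S : Set (ZMod n), Maximal (circulant n D)ᶜ.IsClique S →
          S.ncard = (circulant n D)ᶜ.cliqueNum) ∧
       (∀ C : Set (ZMod n), Maximal (circulant n D).IsClique C →
          C.ncard = (circulant n D).cliqueNum) ∧
       (circulant n D)ᶜ.cliqueNum * (circulant n D).cliqueNum = n) := by
  have : NeZero n := ⟨hn.ne'⟩
  rw [(circulant_isTranslationInvariant n D).isCIS_iff, Nat.card_zmod,
    SimpleGraph.forall_maximal_ncard_mul_ncard_eq_iff]

/-- A circulant `C_n(D)` is CIS iff every maximal stable set has size `α(G)`,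
every maximal clique has size `ω(G)`, and `α(G) * ω(G) = n`. -/
theorem stmt_0 (n : ℕ) (hn : 0 < n) (D : Finset ℕ) (hD : D ⊆ Finset.Icc 1 (n - 1))
    (hsym : ∀ d ∈ D, n - d ∈ D) :
    (circulant n D).IsCIS ↔
      ((∀ S : Set (ZMod n), Maximal (circulant n D)ᶜ.IsClique S →
          S.ncard = (circulant n D)ᶜ.cliqueNum) ∧
       (∀ C : Set (ZMod n), Maximal (circulant n D).IsClique C →
          C.ncard = (circulant n D).cliqueNum) ∧
       (circulant n D)ᶜ.cliqueNum * (circulant n D).cliqueNum = n) :=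
  stmt_0_general n hn D
end

section
/- For every circulant graph G = C_n(D), the inequality α(G)·ω(G) ≤ n holds. -/
open SimpleGraph Finset

namespace SimpleGraph

variable {V : Type*} [AddGroup V] {G : SimpleGraph V}

theorem IsClique.card_mul_card_le_of_adj_add_left [Fintype V]
    (hG : ∀ k a b : V, G.Adj (k + a) (k + b) ↔ G.Adj a b)
    {s t : Finset V} (hs : Gᶜ.IsClique (s : Set V)) (ht : G.IsClique (t : Set V)) :
    #s * #t ≤ Fintype.card V := by
  rw [← card_product, ← card_univ]
  refine card_le_card_of_injOn (fun p => p.2 - p.1) (fun _ _ => mem_coe.2 (mem_univ _)) ?_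
  rintro ⟨a, c⟩ hp ⟨a', c'⟩ hq hdiff
  simp only [coe_product, Set.mem_prod, mem_coe] at hp hq hdiff
  have hc : c = (c - a) + a := (sub_add_cancel c a).symm
  have hc' : c' = (c - a) + a' := by rw [hdiff, sub_add_cancel]
  by_cases hcc : c = c'
  · have haa : a = a' := add_left_cancel (hc.symm.trans (hcc.trans hc'))
    rw [haa, hcc]
  · have haa : a ≠ a' := fun h => hcc (by rw [hc, hc', h])
    have hadj : G.Adj ((c - a) + a) ((c - a) + a') := hc ▸ hc' ▸ ht hp.2 hq.2 hcc
    exact absurd ((hG _ _ _).1 hadj) (hs hp.1 hq.1 haa).2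

theorem cliqueNum_compl_mul_cliqueNum_le_of_adj_add_left [Finite V]
    (hG : ∀ k a b : V, G.Adj (k + a) (k + b) ↔ G.Adj a b) :
    Gᶜ.cliqueNum * G.cliqueNum ≤ Nat.card V := by
  have := Fintype.ofFinite V
  obtain ⟨s, hs⟩ := Gᶜ.exists_isNClique_cliqueNum
  obtain ⟨t, ht⟩ := G.exists_isNClique_cliqueNum
  rw [← hs.card_eq, ← ht.card_eq, Nat.card_eq_fintype_card]
  exact hs.isClique.card_mul_card_le_of_adj_add_left hG ht.isClique

end SimpleGraph

theorem circulant_adj_add_left {n : ℕ} {D : Finset ℕ} (k i j : ZMod n) :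
    (circulant n D).Adj (k + i) (k + j) ↔ (circulant n D).Adj i j := by
  simp only [circulant, fromRel_adj, ne_eq, add_right_inj, add_sub_add_left_eq_sub]

theorem stmt_1_general (n : ℕ) (hn : 0 < n) (D : Finset ℕ) :
    (circulant n D)ᶜ.cliqueNum * (circulant n D).cliqueNum ≤ n := by
  have : NeZero n := ⟨hn.ne'⟩
  simpa only [Nat.card_zmod] using cliqueNum_compl_mul_cliqueNum_le_of_adj_add_left
    (G := circulant n D) fun k i j => circulant_adj_add_left k i j

/-- For every circulant `C_n(D)`, we have `α(G) * ω(G) ≤ n`. -/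
theorem stmt_1 (n : ℕ) (hn : 0 < n) (D : Finset ℕ) (hD : D ⊆ Finset.Icc 1 (n - 1))
    (hsym : ∀ d ∈ D, n - d ∈ D) :
    (circulant n D)ᶜ.cliqueNum * (circulant n D).cliqueNum ≤ n :=
  stmt_1_general n hn D
end

section
/- Let G = C(n; a_1,b_1; …; a_k,b_k) be a k-paired circulant with k ≥ 1, and let d = lcm(a_1·b_1, …, a_k·b_k). Then G is isomorphic to the lexicographic product of the k-paired circulant C(d; a_1,b_1; …; a_k,b_k) and the edgeless graph S_{n/d} on n/d vertices. -/
open SimpleGraph Finset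

/-!
Adjacency in `C(n; a₁,b₁; …)` only depends on whether some `aᵢ` divides the difference `v` of the
two vertices while `aᵢbᵢ` does not, and with `d = lcm(aᵢbᵢ)` this is a property of `v mod d`.
So `C(n; …)` is the pullback of `C(d; …)` along the reduction `ℤ/n → ℤ/d`, and writing a residue
mod `n` as `u + d w` with `u < d`, `w < n/d` identifies it with `C(d; …)[S_{n/d}]`.
-/

lemma NeZero.of_dvd {d n : ℕ} [NeZero n] (h : d ∣ n) : NeZero d :=
  ⟨fun hd => NeZero.ne n (Nat.eq_zero_of_zero_dvd (hd ▸ h))⟩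

section LexProd

variable {V W U : Type*} {G : SimpleGraph V} {H : SimpleGraph W}

@[simp]
lemma lexProd_bot_adj {p q : W × U} :
    (lexProd H (⊥ : SimpleGraph U)).Adj p q ↔ H.Adj p.1 q.1 := by
  simp [lexProd]

def isoLexProdBot (e : V ≃ W × U) (he : ∀ x y, H.Adj (e x).1 (e y).1 ↔ G.Adj x y) :
    G ≃g lexProd H (⊥ : SimpleGraph U) where
  toEquiv := e
  map_rel_iff' := by simp [he]

end LexProd

namespace ZMod

variable {n d : ℕ} [NeZero n]

lemma val_cast_eq_val_mod (x : ZMod n) : (cast x : ZMod d).val = x.val % d := by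
  rw [cast_eq_val, val_natCast]

/-- Writes `x` as `u + d * w` with `u < d` and `w < n / d`. -/
def equivProdOfDvd (hdn : d ∣ n) : ZMod n ≃ ZMod d × ZMod (n / d) where
  toFun x := (cast x, ((x.val / d : ℕ) : ZMod (n / d)))
  invFun p := ((p.1.val + d * p.2.val : ℕ) : ZMod n)
  left_inv x := by
    have hq : x.val / d < n / d := Nat.div_lt_div_of_lt_of_dvd hdn x.val_lt
    simp only [val_cast_eq_val_mod, val_cast_of_lt hq, Nat.mod_add_div, natCast_val, cast_id]
  right_inv := by
    rintro ⟨u, w⟩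
    have hd : NeZero d := .of_dvd hdn
    have hq : NeZero (n / d) := ⟨(Nat.div_pos (Nat.le_of_dvd (NeZero.pos n) hdn)
      (NeZero.pos d)).ne'⟩
    have hlt : u.val + d * w.val < n :=
      calc u.val + d * w.val < d * (w.val + 1) := by linarith [u.val_lt]
        _ ≤ d * (n / d) := Nat.mul_le_mul_left _ w.val_lt
        _ = n := Nat.mul_div_cancel' hdn
    have hdiv : (u.val + d * w.val) / d = w.val := by
      rw [Nat.add_mul_div_left _ _ (NeZero.pos d), Nat.div_eq_of_lt u.val_lt, zero_add]
    refine Prod.ext ?_ ?_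
    · dsimp only
      rw [cast_eq_val, val_cast_of_lt hlt, Nat.cast_add, Nat.cast_mul, natCast_self, zero_mul,
        add_zero, natCast_val, cast_id]
    · simp only [val_cast_of_lt hlt, hdiv, natCast_val, cast_id]

@[simp]
lemma equivProdOfDvd_fst (hdn : d ∣ n) (x : ZMod n) : (equivProdOfDvd hdn x).1 = cast x := rfl

end ZMod

section PairedCirculant

variable {ι : Type*} {a b : ι → ℕ}

def IsPairedDist (a b : ι → ℕ) (v : ℕ) : Prop := ∃ i, a i ∣ v ∧ ¬ a i * b i ∣ v

lemma IsPairedDist.ne_zero {v : ℕ} (h : IsPairedDist a b v) : v ≠ 0 := by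
  rintro rfl
  obtain ⟨i, -, hi⟩ := h
  exact hi (dvd_zero _)

lemma isPairedDist_mod_iff {d v : ℕ} (hd : ∀ i, a i * b i ∣ d) :
    IsPairedDist a b (v % d) ↔ IsPairedDist a b v := by
  have had : ∀ i, a i ∣ d := fun i => (dvd_mul_right _ _).trans (hd i)
  simp only [IsPairedDist, Nat.dvd_mod_iff (had _), Nat.dvd_mod_iff (hd _)]

lemma mem_pairedD {m a b v : ℕ} : v ∈ pairedD m a b ↔ v < m ∧ a ∣ v ∧ ¬ a * b ∣ v := by
  simp only [pairedD, mem_filter, mem_Icc]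
  constructor
  · rintro ⟨⟨hpos, hle⟩, h⟩
    exact ⟨by omega, h⟩
  · rintro ⟨hv, ha, hab⟩
    have : v ≠ 0 := by rintro rfl; exact hab (dvd_zero _)
    exact ⟨⟨by omega, by omega⟩, ha, hab⟩

lemma pairedCirculant_adj [Fintype ι] {n : ℕ} [NeZero n] {x y : ZMod n} :
    (pairedCirculant n a b).Adj x y ↔
      IsPairedDist a b (x - y).val ∨ IsPairedDist a b (y - x).val := by
  simp only [pairedCirculant, circulant, fromRel_adj, mem_biUnion, mem_univ, true_and,
    mem_pairedD, ZMod.val_lt, IsPairedDist]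
  refine ⟨fun h => h.2, fun h => ⟨fun hxy => ?_, h⟩⟩
  subst hxy
  simp only [sub_self, or_self] at h
  exact IsPairedDist.ne_zero h ZMod.val_zero

lemma pairedCirculant_adj_cast [Fintype ι] {n d : ℕ} [NeZero n] (hdn : d ∣ n)
    (hd : ∀ i, a i * b i ∣ d) {x y : ZMod n} :
    (pairedCirculant d a b).Adj (ZMod.cast x) (ZMod.cast y) ↔ (pairedCirculant n a b).Adj x y := by
  have : NeZero d := .of_dvd hdn
  simp only [pairedCirculant_adj, ← ZMod.cast_sub hdn, ZMod.val_cast_eq_val_mod,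
    isPairedDist_mod_iff hd]

end PairedCirculant

theorem stmt_7_general (n k : ℕ) (hn : 0 < n) (a b : Fin k → ℕ)
    (hab : ∀ i, a i * b i ∣ n) :
    Nonempty (pairedCirculant n a b ≃g
      lexProd (pairedCirculant (Finset.univ.lcm (fun i => a i * b i)) a b)
        (⊥ : SimpleGraph (ZMod (n / Finset.univ.lcm (fun i => a i * b i))))) := by
  have : NeZero n := ⟨hn.ne'⟩
  have hdn : univ.lcm (fun i => a i * b i) ∣ n := Finset.lcm_dvd fun i _ => hab i
  exact ⟨isoLexProdBot (ZMod.equivProdOfDvd hdn) fun x y => by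
    simpa using pairedCirculant_adj_cast hdn fun i => Finset.dvd_lcm (mem_univ i)⟩

/-- A `k`-paired circulant `C(n; a₁,b₁; …; a_k,b_k)` with `k ≥ 1` is isomorphic
to the lexicographic product of `C(d; a₁,b₁; …; a_k,b_k)` and the edgeless graph on `n/d`
vertices, where `d = lcm(a₁b₁, …, a_k b_k)`. -/
theorem stmt_7 (n k : ℕ) (hn : 0 < n) (hk : 1 ≤ k) (a b : Fin k → ℕ)
    (ha : ∀ i, 0 < a i) (hb : ∀ i, 0 < b i) (hab : ∀ i, a i * b i ∣ n) :
    Nonempty (pairedCirculant n a b ≃g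
      lexProd (pairedCirculant (Finset.univ.lcm (fun i => a i * b i)) a b)
        (⊥ : SimpleGraph (ZMod (n / Finset.univ.lcm (fun i => a i * b i))))) :=
  stmt_7_general n k hn a b hab
end
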